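/- arXiv:1809.06908 — 2 statements merged into one kernel-verified Lean document; each statement's English description precedes it below -/
import Mathlib

section
/- Fix μ ∈ ℝ, σ_u² > 0, and V > 0. The function F(b) = ∫_{μ}^{∞} [1 - Φ(−b(u−μ)/√(V − b²σ_u²))] p(u) du, where p is the density of a Gaussian N(μ, σ_u²) and Φ is the standard normal CDF, is strictly monotonically increasing in b on the open interval (−√(V/σ_u²), √(V/σ_u²)). -/
set_option maxHeartbeats 1000000

open Real MeasureTheory

/-- Standard normal CDF. -/
noncomputable def stdNormalCDF (x : ℝ) : ℝ :=
  ∫ t in Set.Iic x, (Real.sqrt (2 * Real.pi))⁻¹ * Real.exp (-t ^ 2 / 2)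

/-- Gaussian density with mean μ and variance σ². -/
noncomputable def gaussPdf (μ σ2 u : ℝ) : ℝ :=
  (Real.sqrt (2 * Real.pi * σ2))⁻¹ * Real.exp (-(u - μ) ^ 2 / (2 * σ2))

noncomputable def f0 (t : ℝ) : ℝ := (Real.sqrt (2 * Real.pi))⁻¹ * Real.exp (-t ^ 2 / 2)

lemma f0_pos (t : ℝ) : 0 < f0 t := by
  have : 0 < Real.sqrt (2 * Real.pi) := Real.sqrt_pos.2 (by positivity)
  exact mul_pos (inv_pos.2 this) (Real.exp_pos _)

lemma f0_cont : Continuous f0 := by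
  unfold f0; continuity

lemma f0_integrable : Integrable f0 := by
  have h : Integrable (fun t : ℝ => Real.exp (-(1/2 : ℝ) * t ^ 2)) := integrable_exp_neg_mul_sq (by norm_num)
  have := h.const_mul ((Real.sqrt (2 * Real.pi))⁻¹)
  refine this.congr (Filter.Eventually.of_forall fun t => ?_)
  unfold f0; ring_nf

lemma cdf_strictMono : StrictMono stdNormalCDF := by
  intro x y hxy
  have hsub : stdNormalCDF y - stdNormalCDF x = ∫ t in x..y, f0 t :=
    intervalIntegral.integral_Iic_sub_Iic f0_integrable.integrableOn f0_integrable.integrableOn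
  have hpos : 0 < ∫ t in x..y, f0 t :=
    intervalIntegral.intervalIntegral_pos_of_pos f0_integrable.intervalIntegrable (fun t => f0_pos t) hxy
  linarith

lemma cdf_cont : Continuous stdNormalCDF := by
  have h : ∀ x, stdNormalCDF x = stdNormalCDF 0 + ∫ t in (0:ℝ)..x, f0 t := by
    intro x
    have := intervalIntegral.integral_Iic_sub_Iic (f := f0) f0_integrable.integrableOn f0_integrable.integrableOn (a := 0) (b := x)
    change stdNormalCDF x - stdNormalCDF 0 = _ at this
    linarith
  have : stdNormalCDF = fun x => stdNormalCDF 0 + ∫ t in (0:ℝ)..x, f0 t := funext h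
  rw [this]
  exact continuous_const.add (intervalIntegral.continuous_primitive (fun a b => f0_integrable.intervalIntegrable) 0)

lemma cdf_nonneg (x : ℝ) : 0 ≤ stdNormalCDF x :=
  setIntegral_nonneg measurableSet_Iic (fun t _ => (f0_pos t).le)

lemma cdf_le_one (x : ℝ) : stdNormalCDF x ≤ 1 := by
  have h1 : stdNormalCDF x ≤ ∫ t, f0 t := by
    apply setIntegral_le_integral f0_integrable (Filter.Eventually.of_forall fun t => (f0_pos t).le)
  have h2 : (∫ t, f0 t) = 1 := by
    unfold f0
    rw [MeasureTheory.integral_const_mul]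
    have : (∫ t : ℝ, Real.exp (-t ^ 2 / 2)) = ∫ t : ℝ, Real.exp (-(1/2 : ℝ) * t ^ 2) := by
      congr 1; funext t; ring_nf
    rw [this, integral_gaussian]
    rw [show Real.pi / (1/2 : ℝ) = 2 * Real.pi by ring]
    rw [inv_mul_cancel₀ (by positivity)]
  linarith


lemma gauss_pos {μ σ2 : ℝ} (hσ : 0 < σ2) (u : ℝ) : 0 < gaussPdf μ σ2 u := by
  unfold gaussPdf; positivity

lemma gauss_cont {μ σ2 : ℝ} : Continuous (gaussPdf μ σ2) := by
  unfold gaussPdf; fun_prop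

lemma gauss_integrable {μ σ2 : ℝ} (hσ : 0 < σ2) : Integrable (gaussPdf μ σ2) := by
  have h : Integrable (fun t : ℝ => Real.exp (-(1/(2*σ2)) * t ^ 2)) :=
    integrable_exp_neg_mul_sq (by positivity)
  have h2 : Integrable (fun u : ℝ => Real.exp (-(1/(2*σ2)) * (u - μ) ^ 2)) := Integrable.comp_sub_right h μ
  have h3 := h2.const_mul ((Real.sqrt (2 * Real.pi * σ2))⁻¹)
  refine h3.congr (Filter.Eventually.of_forall fun u => ?_)
  unfold gaussPdf
  rw [show -(u - μ) ^ 2 / (2 * σ2) = -(1/(2*σ2)) * (u - μ) ^ 2 by field_simp]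

lemma key_frac {σ2 V b1 b2 : ℝ} (hσ : 0 < σ2) (hb : b1 < b2)
    (h1 : b1 ^ 2 * σ2 < V) (h2 : b2 ^ 2 * σ2 < V) :
    b1 / Real.sqrt (V - b1 ^ 2 * σ2) < b2 / Real.sqrt (V - b2 ^ 2 * σ2) := by
  set c1 := Real.sqrt (V - b1 ^ 2 * σ2) with hc1
  set c2 := Real.sqrt (V - b2 ^ 2 * σ2) with hc2
  have hc1p : 0 < c1 := Real.sqrt_pos.2 (by linarith)
  have hc2p : 0 < c2 := Real.sqrt_pos.2 (by linarith)
  have hc1sq : c1 ^ 2 = V - b1 ^ 2 * σ2 := Real.sq_sqrt (by linarith)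
  have hc2sq : c2 ^ 2 = V - b2 ^ 2 * σ2 := Real.sq_sqrt (by linarith)
  rw [div_lt_div_iff₀ hc1p hc2p]
  rcases le_or_gt b2 0 with hb2 | hb2
  · have hb1 : b1 < 0 := lt_of_lt_of_le hb hb2
    have hsq : b2 ^ 2 ≤ b1 ^ 2 := by nlinarith
    have : c1 ≤ c2 := Real.sqrt_le_sqrt (by nlinarith)
    nlinarith
  · rcases le_or_gt 0 b1 with hb1 | hb1
    · have hsq : b1 ^ 2 ≤ b2 ^ 2 := by nlinarith
      have : c2 ≤ c1 := Real.sqrt_le_sqrt (by nlinarith)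
      nlinarith
    · nlinarith

theorem stmt_6 (μ σ2 V : ℝ) (hσ : 0 < σ2) (hV : 0 < V) :
    StrictMonoOn
      (fun b : ℝ => ∫ u in Set.Ioi μ,
        (1 - stdNormalCDF (-b * (u - μ) / Real.sqrt (V - b ^ 2 * σ2))) * gaussPdf μ σ2 u)
      (Set.Ioo (-Real.sqrt (V / σ2)) (Real.sqrt (V / σ2))) := by
  intro b1 hb1 b2 hb2 hb
  -- bounds on b² σ2
  have hmem : ∀ b ∈ Set.Ioo (-Real.sqrt (V / σ2)) (Real.sqrt (V / σ2)), b ^ 2 * σ2 < V := by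
    intro b hbmem
    have habs : |b| < Real.sqrt (V / σ2) := abs_lt.2 ⟨hbmem.1, hbmem.2⟩
    have : b ^ 2 < V / σ2 := by
      have := sq_lt_sq' hbmem.1 hbmem.2
      rwa [Real.sq_sqrt (by positivity)] at this
    calc b ^ 2 * σ2 < (V / σ2) * σ2 := by apply mul_lt_mul_of_pos_right this hσ
      _ = V := by field_simp
  have h1 := hmem b1 hb1
  have h2 := hmem b2 hb2
  -- integrand definitions
  set g : ℝ → ℝ → ℝ := fun b u =>
    (1 - stdNormalCDF (-b * (u - μ) / Real.sqrt (V - b ^ 2 * σ2))) * gaussPdf μ σ2 u with hg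
  -- continuity and integrability for a fixed admissible b
  have hcont : ∀ b : ℝ, Continuous (g b) := by
    intro b
    apply Continuous.mul _ gauss_cont
    apply Continuous.sub continuous_const
    exact cdf_cont.comp (by fun_prop)
  have hint : ∀ b : ℝ, IntegrableOn (g b) (Set.Ioi μ) := by
    intro b
    apply Integrable.mono ((gauss_integrable (μ := μ) hσ).integrableOn)
      ((hcont b).aestronglyMeasurable.restrict)
    refine Filter.Eventually.of_forall fun u => ?_
    simp only [hg]
    have hp := (gauss_pos (μ := μ) hσ u).le
    have h01 : 0 ≤ 1 - stdNormalCDF (-b * (u - μ) / Real.sqrt (V - b ^ 2 * σ2)) := by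
      linarith [cdf_le_one (-b * (u - μ) / Real.sqrt (V - b ^ 2 * σ2))]
    have h1' : 1 - stdNormalCDF (-b * (u - μ) / Real.sqrt (V - b ^ 2 * σ2)) ≤ 1 := by
      linarith [cdf_nonneg (-b * (u - μ) / Real.sqrt (V - b ^ 2 * σ2))]
    rw [Real.norm_eq_abs, Real.norm_eq_abs, abs_of_nonneg hp, abs_of_nonneg (mul_nonneg h01 hp)]
    nlinarith
  -- pointwise strict inequality on Ioi μ
  have hlt : ∀ u ∈ Set.Ioi μ, g b1 u < g b2 u := by
    intro u hu
    have hu' : 0 < u - μ := sub_pos.2 hu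
    have hfrac := key_frac hσ hb h1 h2
    have harg : -b2 * (u - μ) / Real.sqrt (V - b2 ^ 2 * σ2)
        < -b1 * (u - μ) / Real.sqrt (V - b1 ^ 2 * σ2) := by
      have e1 : -b1 * (u - μ) / Real.sqrt (V - b1 ^ 2 * σ2)
          = -(u - μ) * (b1 / Real.sqrt (V - b1 ^ 2 * σ2)) := by ring
      have e2 : -b2 * (u - μ) / Real.sqrt (V - b2 ^ 2 * σ2)
          = -(u - μ) * (b2 / Real.sqrt (V - b2 ^ 2 * σ2)) := by ring
      rw [e1, e2]
      exact mul_lt_mul_of_neg_left hfrac (by linarith)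
    have hcdf := cdf_strictMono harg
    exact mul_lt_mul_of_pos_right (by linarith) (gauss_pos hσ u)
  -- conclude
  have hsub : (∫ u in Set.Ioi μ, g b2 u) - (∫ u in Set.Ioi μ, g b1 u)
      = ∫ u in Set.Ioi μ, (g b2 u - g b1 u) := (integral_sub (hint b2) (hint b1)).symm
  have hpos : 0 < ∫ u in Set.Ioi μ, (g b2 u - g b1 u) := by
    rw [setIntegral_pos_iff_support_of_nonneg_ae]
    · have hss : Set.Ioi μ ⊆ Function.support (fun u => g b2 u - g b1 u) := by
        intro u hu
        exact ne_of_gt (sub_pos.2 (hlt u hu))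
      have : volume (Function.support (fun u => g b2 u - g b1 u) ∩ Set.Ioi μ) = volume (Set.Ioi μ) := by
        rw [Set.inter_eq_right.2 hss]
      rw [this]
      simp [Real.volume_Ioi]
    · rw [Filter.EventuallyLE, ae_restrict_iff' measurableSet_Ioi]
      exact Filter.Eventually.of_forall fun u hu => (sub_pos.2 (hlt u hu)).le
    · exact (hint b2).sub (hint b1)
  simp only [hg] at hsub hpos ⊢
  linarith
end

section
/- Let (d_i) be a real sequence converging to d, let (α_j) satisfy α_j > 0, α_j → 0, Σ α_j = ∞, and define the recursion x_{j+1} = x_j + α_j · sgn(d_{φ(j)} − x_j), where φ: ℕ → ℕ is strictly increasing (so d_{φ(j)} → d). Then x_j → d. -/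
open Filter Finset

/-- Sign function: 1 if positive, -1 if negative, 0 at zero. -/
noncomputable def sgn (z : ℝ) : ℝ := if 0 < z then 1 else if z < 0 then -1 else 0

/-!
Fix a level `b` below the limit. Once the targets `d (φ j)` stay above `b` and the steps stay
below `s`, the half-line `(b - s, ∞)` is invariant: below its target the iterate moves up, and
above its target it lies above `b` and moves down by less than `s`. It is also reached, since
while the iterate lies below `b` it climbs by `α j` at every step and `∑ α j = ∞`. The upper bound
follows by applying this to `-x`.
-/

lemma sgn_of_pos {z : ℝ} (hz : 0 < z) : sgn z = 1 := if_pos hz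

lemma sgn_neg (z : ℝ) : sgn (-z) = -sgn z := by
  unfold sgn
  split_ifs <;> linarith

lemma neg_le_mul_sgn {a : ℝ} (ha : 0 ≤ a) (z : ℝ) : -a ≤ a * sgn z := by
  unfold sgn
  split_ifs <;> linarith

lemma tendsto_atTop_of_add_le_succ {α x : ℕ → ℝ}
    (hα : Tendsto (fun n => ∑ j ∈ range n, α j) atTop atTop)
    (hx : ∀ᶠ j in atTop, x j + α j ≤ x (j + 1)) :
    Tendsto x atTop atTop := by
  obtain ⟨N, hN⟩ := eventually_atTop.1 hx
  have lower : ∀ j ≥ N, x N - ∑ i ∈ range N, α i + ∑ i ∈ range j, α i ≤ x j := by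
    intro j hj
    induction j, hj using Nat.le_induction with
    | base => linarith
    | succ j hj ih =>
      rw [sum_range_succ]
      linarith [hN j hj]
  exact tendsto_atTop_mono' atTop (eventually_atTop.2 ⟨N, lower⟩)
    (tendsto_atTop_add_const_left atTop _ hα)

section SignRecursion

variable {t α x : ℕ → ℝ} {b s : ℝ}

theorem eventually_lt_of_sgn_recursion (hx : ∀ j, x (j + 1) = x j + α j * sgn (t j - x j))
    (hαdiv : Tendsto (fun n => ∑ j ∈ range n, α j) atTop atTop)
    (hα : ∀ᶠ j in atTop, 0 ≤ α j ∧ α j < s) (ht : ∀ᶠ j in atTop, b < t j) :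
    ∀ᶠ j in atTop, b - s < x j := by
  obtain ⟨N, hN⟩ := eventually_atTop.1 (hα.and ht)
  have step_up : ∀ j, x j < t j → x (j + 1) = x j + α j := fun j h => by
    rw [hx, sgn_of_pos (sub_pos.2 h), mul_one]
  have invariant : ∀ j ≥ N, b - s < x j → b - s < x (j + 1) := by
    intro j hj hxj
    obtain ⟨⟨hα0, hαs⟩, hbt⟩ := hN j hj
    rcases lt_or_ge (x j) (t j) with h | h
    · rw [step_up j h]
      linarith
    · rw [hx]
      linarith [neg_le_mul_sgn hα0 (t j - x j)]
  have entry : ∃ M ≥ N, b - s < x M := by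
    by_contra! h
    have climbs : ∀ j ≥ N, x j + α j ≤ x (j + 1) := fun j hj => by
      obtain ⟨⟨hα0, hαs⟩, hbt⟩ := hN j hj
      rw [step_up j (by linarith [h j hj])]
    obtain ⟨j, hj, hjN⟩ := ((tendsto_atTop_of_add_le_succ hαdiv
      (eventually_atTop.2 ⟨N, climbs⟩)).eventually_gt_atTop (b - s)).and
      (eventually_ge_atTop N) |>.exists
    linarith [h j hjN]
  obtain ⟨M, hNM, hM⟩ := entry
  filter_upwards [eventually_ge_atTop M] with j hj
  induction j, hj using Nat.le_induction with
  | base => exact hM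
  | succ j hj ih => exact invariant j (hNM.trans hj) ih

theorem eventually_gt_of_sgn_recursion (hx : ∀ j, x (j + 1) = x j + α j * sgn (t j - x j))
    (hαdiv : Tendsto (fun n => ∑ j ∈ range n, α j) atTop atTop)
    (hα : ∀ᶠ j in atTop, 0 ≤ α j ∧ α j < s) (ht : ∀ᶠ j in atTop, t j < b) :
    ∀ᶠ j in atTop, x j < b + s := by
  have hx' : ∀ j, -x (j + 1) = -x j + α j * sgn (-t j - -x j) := fun j => by
    rw [hx, show -t j - -x j = -(t j - x j) by ring, sgn_neg]
    ring
  filter_upwards [eventually_lt_of_sgn_recursion (t := fun j => -t j) (x := fun j => -x j)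
    (b := -b) hx' hαdiv hα (ht.mono fun _ => neg_lt_neg)] with j hj
  linarith

end SignRecursion

theorem stmt_12 (d : ℕ → ℝ) (dlim : ℝ) (hd : Tendsto d atTop (nhds dlim))
    (α : ℕ → ℝ) (hαpos : ∀ j, 0 < α j) (hα0 : Tendsto α atTop (nhds 0))
    (hαdiv : Tendsto (fun n => ∑ j ∈ Finset.range n, α j) atTop atTop)
    (φ : ℕ → ℕ) (hφ : StrictMono φ)
    (x : ℕ → ℝ) (hx : ∀ j, x (j + 1) = x j + α j * sgn (d (φ j) - x j)) :
    Tendsto x atTop (nhds dlim) := by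
  have ht : Tendsto (fun j => d (φ j)) atTop (nhds dlim) := hd.comp hφ.tendsto_atTop
  have hα : ∀ s > 0, ∀ᶠ j in atTop, 0 ≤ α j ∧ α j < s := fun s hs =>
    (hα0.eventually (gt_mem_nhds hs)).mono fun j h => ⟨(hαpos j).le, h⟩
  refine tendsto_order.2 ⟨fun a ha => ?_, fun a ha => ?_⟩
  · obtain ⟨b, hab, hb⟩ := exists_between ha
    simpa using eventually_lt_of_sgn_recursion hx hαdiv (hα (b - a) (sub_pos.2 hab))
      (ht.eventually (lt_mem_nhds hb))
  · obtain ⟨b, hb, hba⟩ := exists_between ha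
    simpa using eventually_gt_of_sgn_recursion hx hαdiv (hα (a - b) (sub_pos.2 hba))
      (ht.eventually (gt_mem_nhds hb))
end
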